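/- The Dirichlet convolution identity at s = 2: ∏_{p ≡ 1 (mod 4)} ((p² + 1)/(p² - 1)) = 12G/π², where G is the Catalan constant and the product runs over primes p ≡ 1 (mod 4). -/

import Mathlib

/-!
Multiplying the Euler products of `ζ(2)`, `L(2, χ₄) = G` and `1 / ζ(4)`, the factor at a prime `p`
is `(1 + p⁻²) / (1 - χ₄(p) p⁻²)`: it is `5/4` at `p = 2`, `1` for `p ≡ 3 (mod 4)` and
`(p² + 1) / (p² - 1)` for `p ≡ 1 (mod 4)`. Hence the product in question is
`(4/5) · ζ(2) G / ζ(4) = 12 G / π²`.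
-/

open Real

/-- The Catalan constant `G = ∑_{k ≥ 0} (-1)^k/(2k+1)²`. -/
noncomputable def catalan' : ℝ := ∑' k : ℕ, (-1 : ℝ) ^ k / (2 * k + 1) ^ 2

theorem hasProd_inv_one_sub_div_pow_of_abs_le_one (χ : ℕ →*₀ ℝ) (hχ : ∀ n, |χ n| ≤ 1) {k : ℕ}
    (hk : 2 ≤ k) :
    HasProd (fun p : Nat.Primes ↦ (1 - χ p / ((p : ℕ) : ℝ) ^ k)⁻¹) (∑' n : ℕ, χ n / (n : ℝ) ^ k) := by
  let f : ℕ →*₀ ℝ := χ * invMonoidWithZeroHom.comp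
    ((powMonoidWithZeroHom (M₀ := ℝ) (n := k) (by omega)).comp
      (Nat.castRingHom ℝ).toMonoidWithZeroHom)
  have hsum : Summable (‖f ·‖) := by
    refine (Real.summable_nat_pow_inv.mpr (by omega : 1 < k)).of_nonneg_of_le
      (fun _ ↦ norm_nonneg _) fun n ↦ ?_
    change ‖χ n * ((n : ℝ) ^ k)⁻¹‖ ≤ _
    rw [norm_mul, Real.norm_eq_abs, norm_of_nonneg (by positivity)]
    exact mul_le_of_le_one_left (by positivity) (hχ n)
  simp only [div_eq_mul_inv]
  exact EulerProduct.eulerProduct_completely_multiplicative_hasProd hsum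

theorem hasProd_inv_one_sub_one_div_pow {k : ℕ} (hk : 2 ≤ k) :
    HasProd (fun p : Nat.Primes ↦ (1 - 1 / ((p : ℕ) : ℝ) ^ k)⁻¹) (∑' n : ℕ, 1 / (n : ℝ) ^ k) := by
  classical
  -- `(1 : ℕ →*₀ ℝ)` vanishes at `0`, as does the junk value `1 / 0 ^ k`.
  have h := hasProd_inv_one_sub_div_pow_of_abs_le_one 1
    (fun n ↦ by rw [MonoidWithZeroHom.one_apply_def]; split_ifs <;> norm_num) hk
  convert h using 3 with p n
  · rw [MonoidWithZeroHom.one_apply_def, if_neg p.2.ne_zero]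
  · rw [MonoidWithZeroHom.one_apply_def]
    split_ifs with hn <;> simp [hn, show k ≠ 0 by omega]

noncomputable def chi4 : ℕ →*₀ ℝ where
  toFun n := ZMod.χ₄ n
  map_zero' := by simp
  map_one' := by simp
  map_mul' m n := by rw [Nat.cast_mul, map_mul, Int.cast_mul]

lemma chi4_apply (n : ℕ) : chi4 n = ZMod.χ₄ n := rfl

lemma abs_chi4_le_one (n : ℕ) : |chi4 n| ≤ 1 := by
  rw [chi4_apply, ZMod.χ₄_nat_eq_if_mod_four]
  split_ifs <;> norm_num

lemma tsum_chi4_div_sq : ∑' n : ℕ, chi4 n / (n : ℝ) ^ 2 = catalan' := by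
  have hsupp : Function.support (fun n : ℕ ↦ chi4 n / (n : ℝ) ^ 2) ⊆
      Set.range fun k : ℕ ↦ 2 * k + 1 := by
    intro n hn
    obtain ⟨k, rfl | rfl⟩ := n.even_or_odd'
    · rw [Function.mem_support, chi4_apply, ZMod.χ₄_nat_eq_if_mod_four, if_pos (by omega)] at hn
      simp at hn
    · exact ⟨k, rfl⟩
  have hinj : Function.Injective fun k : ℕ ↦ 2 * k + 1 := fun a b h ↦ by simpa using h
  rw [catalan', ← hinj.tsum_eq hsupp]
  refine tsum_congr fun k ↦ ?_
  rw [chi4_apply, ZMod.χ₄_eq_neg_one_pow (by omega), show (2 * k + 1) / 2 = k by omega]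
  push_cast
  rfl

lemma inv_one_sub_one_div_sq_mul_inv_one_sub_div_sq_div {t : ℝ} (ht : t ^ 2 ≠ 1) (c : ℝ) :
    (1 - 1 / t ^ 2)⁻¹ * (1 - c / t ^ 2)⁻¹ / (1 - 1 / t ^ 4)⁻¹ = (1 + 1 / t ^ 2) / (1 - c / t ^ 2) := by
  rcases eq_or_ne t 0 with rfl | h0
  · simp
  have h1 : 1 - 1 / t ^ 2 ≠ 0 := by
    rw [one_sub_div (pow_ne_zero 2 h0)]
    exact div_ne_zero (sub_ne_zero.mpr ht) (pow_ne_zero 2 h0)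
  rw [div_inv_eq_mul, show 1 - 1 / t ^ 4 = (1 - 1 / t ^ 2) * (1 + 1 / t ^ 2) by ring]
  field_simp

lemma eulerFactors_mul_ite_eq_mulIndicator (p : Nat.Primes) :
    (1 - 1 / ((p : ℕ) : ℝ) ^ 2)⁻¹ * (1 - chi4 p / ((p : ℕ) : ℝ) ^ 2)⁻¹ /
        (1 - 1 / ((p : ℕ) : ℝ) ^ 4)⁻¹ * (if (p : ℕ) = 2 then 4 / 5 else 1) =
      {q : Nat.Primes | (q : ℕ) % 4 = 1}.mulIndicator
        (fun q ↦ (((q : ℕ) : ℝ) ^ 2 + 1) / (((q : ℕ) : ℝ) ^ 2 - 1)) p := by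
  have hp : (1 : ℝ) < ((p : ℕ) : ℝ) ^ 2 := by
    have : (2 : ℝ) ≤ (p : ℕ) := by exact_mod_cast p.2.two_le
    nlinarith
  rw [inv_one_sub_one_div_sq_mul_inv_one_sub_div_sq_div hp.ne']
  simp only [Set.mulIndicator_apply, Set.mem_ofPred_eq]
  rw [chi4_apply, ZMod.χ₄_nat_eq_if_mod_four]
  by_cases h2 : (p : ℕ) = 2
  · simp only [h2]
    norm_num
  have hodd : (p : ℕ) % 2 = 1 := p.2.mod_two_eq_one_iff_ne_two.mpr h2
  rw [if_neg h2, mul_one, if_neg (by omega)]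
  rcases (by omega : (p : ℕ) % 4 = 1 ∨ (p : ℕ) % 4 = 3) with h4 | h4
  · have : ((p : ℕ) : ℝ) ^ 2 - 1 ≠ 0 := by linarith
    have : ((p : ℕ) : ℝ) ≠ 0 := Nat.cast_ne_zero.mpr p.2.ne_zero
    rw [if_pos h4, if_pos h4]
    push_cast
    field_simp
  · rw [if_neg (by omega), if_neg (by omega)]
    push_cast
    rw [neg_div, sub_neg_eq_add, div_self (by positivity)]

/-- `∏_{p ≡ 1 (mod 4)} (p²+1)/(p²-1) = 12G/π²`. -/
theorem prod_primes_one_mod_four :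
    (∏' p : {p : ℕ // p.Prime ∧ p % 4 = 1},
        (((p : ℕ) : ℝ) ^ 2 + 1) / (((p : ℕ) : ℝ) ^ 2 - 1)) =
      12 * catalan' / Real.pi ^ 2 := by
  have hζ2 : HasProd (fun p : Nat.Primes ↦ (1 - 1 / ((p : ℕ) : ℝ) ^ 2)⁻¹) (π ^ 2 / 6) :=
    hasSum_zeta_two.tsum_eq ▸ hasProd_inv_one_sub_one_div_pow le_rfl
  have hζ4 : HasProd (fun p : Nat.Primes ↦ (1 - 1 / ((p : ℕ) : ℝ) ^ 4)⁻¹) (π ^ 4 / 90) :=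
    hasSum_zeta_four.tsum_eq ▸ hasProd_inv_one_sub_one_div_pow (by norm_num)
  have hL : HasProd (fun p : Nat.Primes ↦ (1 - chi4 p / ((p : ℕ) : ℝ) ^ 2)⁻¹) catalan' :=
    tsum_chi4_div_sq ▸ hasProd_inv_one_sub_div_pow_of_abs_le_one chi4 abs_chi4_le_one le_rfl
  have h2 : HasProd (fun p : Nat.Primes ↦ if (p : ℕ) = 2 then (4 / 5 : ℝ) else 1) (4 / 5) :=
    hasProd_single (f := fun p : Nat.Primes ↦ if (p : ℕ) = 2 then (4 / 5 : ℝ) else 1)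
      ⟨2, Nat.prime_two⟩ fun p hp ↦ if_neg fun h ↦ hp (Subtype.ext h)
  have h := ((hζ2.mul hL).div₀ hζ4 (by positivity)).mul h2
  simp only [eulerFactors_mul_ite_eq_mulIndicator] at h
  have hsub := (Equiv.subtypeSubtypeEquivSubtypeInter Nat.Prime (· % 4 = 1)).symm.hasProd_iff.mpr
    (hasProd_subtype_iff_mulIndicator.mpr h)
  refine hsub.tprod_eq.trans ?_
  field_simp
  ring
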